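/- arXiv:2406.06155 — 3 statements merged into one kernel-verified Lean document; each statement's English description precedes it below -/
import Mathlib

section
/- Let β > 0, ξ > 0, d₁ ∈ ℝ, and let f : [0,∞) → ℝ be continuous, differentiable on (0,∞), with C₀ > 0 satisfying |f(u) − 1| ≤ C₀·u for u ∈ (0,1], |f(u) + β| ≤ C₀/u for u ≥ 1, and |f'(u)| ≤ C₀/(1+u²) for u > 0. Define w₁(τ) = ∫_{−∞}^{τ} (f(e^{(ξ+1)·θ + d₁}) − 1) dθ. Let t₁ ∈ ℝ, q₀ ∈ ℝ, σ > 0, 0 < ν < (1+ξ)·σ, C₁ > 0, and let 0 < ν' < ν. Then there exist constants C₂ > 0 and λ₀ > 0 such that for every λ ≥ λ₀ and every measurable z : [t₁−σ, t₁+σ] → ℝ with |z(s) − ((1+ξ)·(s − t₁) + d₁/λ)| ≤ C₁·e^{−νλ} for all s, the function q(t) = q₀ + ∫_{t₁−σ}^{t} (f(e^{λ·z(s)}) − 1) ds satisfies |q(t) − (q₀ + w₁(λ(t − t₁))/λ)| ≤ C₂·e^{−ν'λ} for all t ∈ [t₁−σ, t₁+σ]. -/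
open Real MeasureTheory intervalIntegral Set

-- Lipschitz bound for x ↦ f (exp x)
lemma aux_lip (C₀ : ℝ) (f : ℝ → ℝ)
    (hfd : ∀ u : ℝ, 0 < u → DifferentiableAt ℝ f u)
    (hf' : ∀ u : ℝ, 0 < u → |deriv f u| ≤ C₀ / (1 + u ^ 2)) (hC₀ : 0 < C₀) :
    ∀ x y : ℝ, |f (Real.exp x) - f (Real.exp y)| ≤ C₀ / 2 * |x - y| := by
  intro x y
  have hder : ∀ u ∈ (Set.univ : Set ℝ), HasDerivWithinAt (fun x => f (Real.exp x))
      (deriv f (Real.exp u) * Real.exp u) Set.univ u := by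
    intro u _
    exact (((hfd _ (Real.exp_pos u)).hasDerivAt).comp u (Real.hasDerivAt_exp u)).hasDerivWithinAt
  have hbound : ∀ u ∈ (Set.univ : Set ℝ), ‖deriv f (Real.exp u) * Real.exp u‖ ≤ C₀ / 2 := by
    intro u _
    have h1 : |deriv f (Real.exp u)| ≤ C₀ / (1 + (Real.exp u) ^ 2) := hf' _ (Real.exp_pos u)
    have h2 : (0:ℝ) < 1 + (Real.exp u) ^ 2 := by positivity
    have h3 : 2 * Real.exp u ≤ 1 + (Real.exp u) ^ 2 := by nlinarith [sq_nonneg (Real.exp u - 1)]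
    rw [Real.norm_eq_abs, abs_mul, abs_of_pos (Real.exp_pos u)]
    calc |deriv f (Real.exp u)| * Real.exp u ≤ C₀ / (1 + (Real.exp u) ^ 2) * Real.exp u := by
          exact mul_le_mul_of_nonneg_right h1 (Real.exp_pos u).le
      _ ≤ C₀ / 2 := by
          rw [div_mul_eq_mul_div, div_le_div_iff₀ h2 two_pos]
          nlinarith [Real.exp_pos u]
  have := Convex.norm_image_sub_le_of_norm_hasDerivWithin_le hder hbound convex_univ
    (Set.mem_univ y) (Set.mem_univ x)
  simpa [Real.norm_eq_abs] using this

set_option maxHeartbeats 2000000 in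
/-- boundary-layer step for the correction `q*_λ` near an increasing zero
crossing `t₁` of the delayed argument: if `z(s) = (1+ξ)(s-t₁) + d₁/λ + O(e^{-νλ})` on
`[t₁-σ, t₁+σ]`, then `q(t) = q₀ + ∫_{t₁-σ}^t (f(e^{λz(s)}) - 1) ds` satisfies
`q(t) = q₀ + w₁(λ(t-t₁))/λ + O(e^{-ν'λ})` uniformly, where
`w₁(τ) = ∫_{-∞}^τ (f(e^{(ξ+1)θ+d₁}) - 1) dθ`. -/
theorem stmt_15 (β ξ d₁ C₀ : ℝ) (hβ : 0 < β) (hξ : 0 < ξ) (hC₀ : 0 < C₀)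
    (f : ℝ → ℝ) (hfc : ContinuousOn f (Set.Ici 0))
    (hfd : ∀ u : ℝ, 0 < u → DifferentiableAt ℝ f u)
    (hf0 : ∀ u ∈ Set.Ioc (0:ℝ) 1, |f u - 1| ≤ C₀ * u)
    (hfinf : ∀ u : ℝ, 1 ≤ u → |f u + β| ≤ C₀ / u)
    (hf' : ∀ u : ℝ, 0 < u → |deriv f u| ≤ C₀ / (1 + u ^ 2))
    (t₁ q₀ σ ν C₁ ν' : ℝ) (hσ : 0 < σ) (hν : 0 < ν) (hνσ : ν < (1 + ξ) * σ)
    (hC₁ : 0 < C₁) (hν'0 : 0 < ν') (hν' : ν' < ν) :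
    ∃ C₂ > (0:ℝ), ∃ lam₀ > (0:ℝ), ∀ lam : ℝ, lam₀ ≤ lam →
      ∀ z : ℝ → ℝ, Measurable z →
        (∀ s ∈ Set.Icc (t₁ - σ) (t₁ + σ),
          |z s - ((1 + ξ) * (s - t₁) + d₁ / lam)| ≤ C₁ * Real.exp (-ν * lam)) →
        ∀ t ∈ Set.Icc (t₁ - σ) (t₁ + σ),
          |(q₀ + ∫ s in (t₁ - σ)..t, (f (Real.exp (lam * z s)) - 1))
              - (q₀ + (∫ θ in Set.Iic (lam * (t - t₁)),
                  (f (Real.exp ((ξ + 1) * θ + d₁)) - 1)) / lam)|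
            ≤ C₂ * Real.exp (-ν' * lam) := by
  have hξ1 : (0:ℝ) < ξ + 1 := by linarith
  set M : ℝ := 1 + β + C₀ with hM
  -- bound on |f (exp x)|
  have hFb : ∀ x : ℝ, |f (Real.exp x)| ≤ M := by
    intro x
    rcases le_or_gt (Real.exp x) 1 with h | h
    · have := hf0 (Real.exp x) ⟨Real.exp_pos x, h⟩
      have : |f (Real.exp x)| ≤ C₀ * Real.exp x + 1 := by
        calc |f (Real.exp x)| = |(f (Real.exp x) - 1) + 1| := by ring_nf
          _ ≤ |f (Real.exp x) - 1| + 1 := by exact (abs_add_le _ _).trans (by simp)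
          _ ≤ C₀ * Real.exp x + 1 := by linarith
      nlinarith [Real.exp_pos x]
    · have h1 := hfinf (Real.exp x) h.le
      have h2 : C₀ / Real.exp x ≤ C₀ := by
        rw [div_le_iff₀ (Real.exp_pos x)]; nlinarith
      have : |f (Real.exp x)| ≤ C₀ / Real.exp x + β := by
        calc |f (Real.exp x)| = |(f (Real.exp x) + β) + (-β)| := by ring_nf
          _ ≤ |f (Real.exp x) + β| + |(-β)| := abs_add_le _ _
          _ = |f (Real.exp x) + β| + β := by rw [abs_neg, abs_of_pos hβ]
          _ ≤ C₀ / Real.exp x + β := by linarith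
      linarith
  have hFlip := aux_lip C₀ f hfd hf' hC₀
  have hFcont : Continuous (fun x : ℝ => f (Real.exp x)) := by
    rw [continuous_iff_continuousAt]
    intro x
    exact ((hfd _ (Real.exp_pos x)).continuousAt).comp Real.continuous_exp.continuousAt
  set g : ℝ → ℝ := fun θ => f (Real.exp ((ξ + 1) * θ + d₁)) - 1 with hg
  have hgcont : Continuous g := by
    have : Continuous fun θ : ℝ => (ξ + 1) * θ + d₁ := by continuity
    exact (hFcont.comp this).sub continuous_const
  set m : ℝ := -d₁ / (ξ + 1) with hm
  have hmzero : (ξ + 1) * m + d₁ = 0 := by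
    rw [hm]; field_simp; ring
  -- exponential decay bound on the left
  have hgsmall : ∀ θ : ℝ, θ ≤ m → |g θ| ≤ C₀ * Real.exp ((ξ + 1) * θ + d₁) := by
    intro θ hθ
    have hle : (ξ + 1) * θ + d₁ ≤ 0 := by nlinarith
    have : Real.exp ((ξ + 1) * θ + d₁) ≤ 1 := Real.exp_le_one_iff.mpr hle
    exact hf0 _ ⟨Real.exp_pos _, this⟩
  set K : ℝ := max ((M + 1) * Real.exp (-m)) (C₀ * Real.exp (d₁ + ξ * m)) with hK
  have hgglob : ∀ θ : ℝ, |g θ| ≤ K * Real.exp θ := by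
    intro θ
    rcases le_or_gt θ m with h | h
    · calc |g θ| ≤ C₀ * Real.exp ((ξ + 1) * θ + d₁) := hgsmall θ h
        _ = C₀ * Real.exp (d₁ + ξ * θ) * Real.exp θ := by
            rw [mul_assoc, ← Real.exp_add]; ring_nf
        _ ≤ K * Real.exp θ := by
            have h1 : Real.exp (d₁ + ξ * θ) ≤ Real.exp (d₁ + ξ * m) :=
              Real.exp_le_exp.mpr (by nlinarith)
            have : C₀ * Real.exp (d₁ + ξ * θ) ≤ K :=
              le_trans (by nlinarith) (le_max_right _ _)
            exact mul_le_mul_of_nonneg_right this (Real.exp_pos θ).le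
    · have h1 : |g θ| ≤ M + 1 := by
        calc |g θ| ≤ |f (Real.exp ((ξ + 1) * θ + d₁))| + 1 := by
              exact (abs_sub _ _).trans (by simp)
          _ ≤ M + 1 := by linarith [hFb ((ξ + 1) * θ + d₁)]
      have h2 : (1:ℝ) ≤ Real.exp (-m) * Real.exp θ := by
        rw [← Real.exp_add]
        exact Real.one_le_exp (by linarith)
      have hM1 : (0:ℝ) < M + 1 := by positivity
      calc |g θ| ≤ M + 1 := h1
        _ ≤ (M + 1) * (Real.exp (-m) * Real.exp θ) := by nlinarith
        _ = (M + 1) * Real.exp (-m) * Real.exp θ := by ring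
        _ ≤ K * Real.exp θ := by
            exact mul_le_mul_of_nonneg_right (le_max_left _ _) (Real.exp_pos θ).le
  have hKpos : 0 < K := lt_of_lt_of_le (by positivity) (le_max_right _ _)
  have hgint : ∀ T : ℝ, IntegrableOn g (Set.Iic T) := by
    intro T
    have hdom : IntegrableOn (fun θ => K * Real.exp θ) (Set.Iic T) :=
      (integrableOn_exp_Iic T).const_mul K
    refine hdom.mono' (hgcont.aestronglyMeasurable.restrict) ?_
    filter_upwards with θ
    rw [Real.norm_eq_abs]
    exact hgglob θ
  -- constants
  have hδ : (0:ℝ) < ν - ν' := by linarith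
  refine ⟨C₀ * C₁ * σ / (ν - ν') + C₀ * Real.exp d₁, by positivity,
    max 1 (d₁ / ((ξ + 1) * σ)), lt_of_lt_of_le one_pos (le_max_left _ _), ?_⟩
  intro lam hlam z hz hzb t ht
  have hlam1 : (1:ℝ) ≤ lam := le_trans (le_max_left _ _) hlam
  have hlam0 : (0:ℝ) < lam := lt_of_lt_of_le one_pos hlam1
  have hlamd : d₁ ≤ lam * ((ξ + 1) * σ) := by
    have h := le_trans (le_max_right 1 (d₁ / ((ξ + 1) * σ))) hlam
    have hpos : (0:ℝ) < (ξ + 1) * σ := by positivity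
    have := (div_le_iff₀ hpos).mp h
    linarith
  set a : ℝ := t₁ - σ with ha
  set A : ℝ := lam * a + -(lam * t₁) with hA
  have hAval : A = -(lam * σ) := by rw [hA, ha]; ring
  have hAm : A ≤ m := by
    have h1 : (ξ + 1) * A ≤ (ξ + 1) * m := by
      rw [hAval]; nlinarith
    exact le_of_mul_le_mul_left h1 hξ1
  -- integrability of the two integrands
  have hmeas1 : Measurable (fun s => f (Real.exp (lam * z s)) - 1) :=
    ((hFcont.measurable).comp (hz.const_mul lam)).sub measurable_const
  have hint1 : IntervalIntegrable (fun s => f (Real.exp (lam * z s)) - 1) volume a t := by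
    rw [intervalIntegrable_iff]
    apply Measure.integrableOn_of_bounded (M := M + 1)
    · rw [Set.uIoc]; exact measure_Ioc_lt_top.ne
    · exact hmeas1.aestronglyMeasurable
    · filter_upwards with s
      rw [Real.norm_eq_abs]
      calc |f (Real.exp (lam * z s)) - 1| ≤ |f (Real.exp (lam * z s))| + 1 :=
            (abs_sub _ _).trans (by simp)
        _ ≤ M + 1 := by linarith [hFb (lam * z s)]
  have hint2 : IntervalIntegrable (fun s => g (lam * s + -(lam * t₁))) volume a t :=
    (hgcont.comp ((continuous_const.mul continuous_id).add continuous_const)).intervalIntegrable a t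
  -- split the integral
  have hint3 : IntervalIntegrable
      (fun s => f (Real.exp (lam * z s)) - f (Real.exp ((ξ + 1) * (lam * s + -(lam * t₁)) + d₁)))
      volume a t := by
    have heq : (fun s => f (Real.exp (lam * z s)) - f (Real.exp ((ξ + 1) * (lam * s + -(lam * t₁)) + d₁)))
        = fun s => (f (Real.exp (lam * z s)) - 1) - g (lam * s + -(lam * t₁)) := by
      funext s; simp only [hg]; ring
    rw [heq]; exact hint1.sub hint2
  have hsplit : (∫ s in a..t, (f (Real.exp (lam * z s)) - 1)) =
      (∫ s in a..t, (f (Real.exp (lam * z s)) - f (Real.exp ((ξ + 1) * (lam * s + -(lam * t₁)) + d₁))))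
        + ∫ s in a..t, g (lam * s + -(lam * t₁)) := by
    rw [← intervalIntegral.integral_add hint3 hint2]
    apply intervalIntegral.integral_congr
    intro s _
    simp only [hg]
    ring
  -- change of variables
  have hcov : (∫ s in a..t, g (lam * s + -(lam * t₁)))
      = lam⁻¹ • ∫ θ in A..(lam * t + -(lam * t₁)), g θ := by
    rw [intervalIntegral.integral_comp_mul_add g hlam0.ne' (-(lam * t₁)), hA]
  set T : ℝ := lam * t + -(lam * t₁) with hT
  have hTval : lam * (t - t₁) = T := by rw [hT]; ring
  have hiic : (∫ θ in A..T, g θ) = (∫ θ in Set.Iic T, g θ) - ∫ θ in Set.Iic A, g θ :=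
    (intervalIntegral.integral_Iic_sub_Iic (hgint A) (hgint T)).symm
  -- the target difference
  have hD : (q₀ + ∫ s in a..t, (f (Real.exp (lam * z s)) - 1))
      - (q₀ + (∫ θ in Set.Iic (lam * (t - t₁)), g θ) / lam)
      = (∫ s in a..t, (f (Real.exp (lam * z s)) - f (Real.exp ((ξ + 1) * (lam * s + -(lam * t₁)) + d₁))))
        - (∫ θ in Set.Iic A, g θ) / lam := by
    rw [hsplit, hcov, hiic, hTval, smul_eq_mul]
    field_simp
    ring
  -- bound term 1
  have hterm1 : |∫ s in a..t, (f (Real.exp (lam * z s)) - f (Real.exp ((ξ + 1) * (lam * s + -(lam * t₁)) + d₁)))|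
      ≤ C₀ / 2 * (lam * (C₁ * Real.exp (-ν * lam))) * |t - a| := by
    have hb : ∀ s ∈ Set.uIoc a t,
        ‖f (Real.exp (lam * z s)) - f (Real.exp ((ξ + 1) * (lam * s + -(lam * t₁)) + d₁))‖
          ≤ C₀ / 2 * (lam * (C₁ * Real.exp (-ν * lam))) := by
      intro s hs
      have hsmem : s ∈ Set.Icc (t₁ - σ) (t₁ + σ) := by
        have h1 : min a t ≤ s := le_of_lt hs.1
        have h2 : s ≤ max a t := hs.2
        constructor
        · calc t₁ - σ = a := ha.symm
            _ ≤ min a t := le_min le_rfl (by linarith [ht.1])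
            _ ≤ s := h1
        · calc s ≤ max a t := h2
            _ ≤ t₁ + σ := max_le (by rw [ha]; linarith) ht.2
      have hld : d₁ / lam * lam = d₁ := div_mul_cancel₀ d₁ hlam0.ne'
      have heq : lam * z s - ((ξ + 1) * (lam * s + -(lam * t₁)) + d₁)
          = lam * (z s - ((1 + ξ) * (s - t₁) + d₁ / lam)) := by
        linear_combination hld
      rw [Real.norm_eq_abs]
      calc |f (Real.exp (lam * z s)) - f (Real.exp ((ξ + 1) * (lam * s + -(lam * t₁)) + d₁))|
          ≤ C₀ / 2 * |lam * z s - ((ξ + 1) * (lam * s + -(lam * t₁)) + d₁)| := hFlip _ _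
        _ = C₀ / 2 * (lam * |z s - ((1 + ξ) * (s - t₁) + d₁ / lam)|) := by
            rw [heq, abs_mul, abs_of_pos hlam0]
        _ ≤ C₀ / 2 * (lam * (C₁ * Real.exp (-ν * lam))) := by
            have hzs := hzb s hsmem
            gcongr C₀ / 2 * (lam * ?_)
    simpa [Real.norm_eq_abs] using
      intervalIntegral.norm_integral_le_of_norm_le_const hb
  -- bound term 2 (tail)
  have hterm2 : |∫ θ in Set.Iic A, g θ| ≤ C₀ * Real.exp (d₁ + (ξ + 1) * A) := by
    have hdom : IntegrableOn (fun θ => C₀ * Real.exp (d₁ + ξ * A) * Real.exp θ) (Set.Iic A) :=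
      (integrableOn_exp_Iic A).const_mul _
    have hb : ∀ᵐ θ ∂(volume.restrict (Set.Iic A)),
        ‖g θ‖ ≤ C₀ * Real.exp (d₁ + ξ * A) * Real.exp θ := by
      rw [ae_restrict_iff' measurableSet_Iic]
      filter_upwards with θ hθ
      have hθA : θ ≤ A := hθ
      rw [Real.norm_eq_abs]
      calc |g θ| ≤ C₀ * Real.exp ((ξ + 1) * θ + d₁) := hgsmall θ (hθA.trans hAm)
        _ = C₀ * Real.exp (d₁ + ξ * θ) * Real.exp θ := by
            rw [mul_assoc, ← Real.exp_add]; ring_nf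
        _ ≤ C₀ * Real.exp (d₁ + ξ * A) * Real.exp θ := by
            gcongr
    calc |∫ θ in Set.Iic A, g θ| ≤ ∫ θ in Set.Iic A, C₀ * Real.exp (d₁ + ξ * A) * Real.exp θ := by
          simpa [Real.norm_eq_abs] using MeasureTheory.norm_integral_le_of_norm_le hdom hb
      _ = C₀ * Real.exp (d₁ + ξ * A) * Real.exp A := by
          rw [MeasureTheory.integral_const_mul, integral_exp_Iic]
      _ = C₀ * Real.exp (d₁ + (ξ + 1) * A) := by
          rw [mul_assoc, ← Real.exp_add]; ring_nf
  -- assemble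
  rw [hD]
  have htail : |∫ θ in Set.Iic A, g θ| / lam ≤ C₀ * Real.exp d₁ * Real.exp (-ν' * lam) := by
    have h1 : (ξ + 1) * A ≤ -ν' * lam := by
      rw [hAval]
      have : ν' * lam ≤ ν * lam := by nlinarith
      nlinarith
    have h2 : Real.exp (d₁ + (ξ + 1) * A) ≤ Real.exp d₁ * Real.exp (-ν' * lam) := by
      rw [← Real.exp_add]
      exact Real.exp_le_exp.mpr (by linarith)
    calc |∫ θ in Set.Iic A, g θ| / lam ≤ |∫ θ in Set.Iic A, g θ| := by
          rw [div_le_iff₀ hlam0]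
          nlinarith [abs_nonneg (∫ θ in Set.Iic A, g θ)]
      _ ≤ C₀ * Real.exp (d₁ + (ξ + 1) * A) := hterm2
      _ ≤ C₀ * (Real.exp d₁ * Real.exp (-ν' * lam)) := by nlinarith
      _ = C₀ * Real.exp d₁ * Real.exp (-ν' * lam) := by ring
  have hmain : C₀ / 2 * (lam * (C₁ * Real.exp (-ν * lam))) * |t - a|
      ≤ C₀ * C₁ * σ / (ν - ν') * Real.exp (-ν' * lam) := by
    obtain ⟨ht1, ht2⟩ := ht
    have hta : |t - a| ≤ 2 * σ := by
      rw [ha, abs_le]; constructor <;> linarith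
    have hexp1 : (ν - ν') * lam ≤ Real.exp ((ν - ν') * lam) := by
      linarith [Real.add_one_le_exp ((ν - ν') * lam)]
    have hexpsplit : Real.exp (-ν * lam) = Real.exp (-(ν - ν') * lam) * Real.exp (-ν' * lam) := by
      rw [← Real.exp_add]; ring_nf
    have hinv : Real.exp (-(ν - ν') * lam) * Real.exp ((ν - ν') * lam) = 1 := by
      have h0 : -(ν - ν') * lam + (ν - ν') * lam = 0 := by ring
      rw [← Real.exp_add, h0, Real.exp_zero]
    have hkey : lam * Real.exp (-ν * lam) ≤ 1 / (ν - ν') * Real.exp (-ν' * lam) := by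
      rw [hexpsplit]
      have h1 : lam * Real.exp (-(ν - ν') * lam) ≤ 1 / (ν - ν') := by
        rw [le_div_iff₀ hδ]
        nlinarith [Real.exp_pos (-(ν - ν') * lam), hexp1]
      nlinarith [Real.exp_pos (-ν' * lam), Real.exp_pos (-(ν - ν') * lam)]
    calc C₀ / 2 * (lam * (C₁ * Real.exp (-ν * lam))) * |t - a|
        ≤ C₀ / 2 * (lam * (C₁ * Real.exp (-ν * lam))) * (2 * σ) := by
          apply mul_le_mul_of_nonneg_left hta
          positivity
      _ = C₀ * C₁ * σ * (lam * Real.exp (-ν * lam)) := by ring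
      _ ≤ C₀ * C₁ * σ * (1 / (ν - ν') * Real.exp (-ν' * lam)) := by
          apply mul_le_mul_of_nonneg_left hkey
          positivity
      _ = C₀ * C₁ * σ / (ν - ν') * Real.exp (-ν' * lam) := by ring
  calc |(∫ s in a..t, (f (Real.exp (lam * z s)) - f (Real.exp ((ξ + 1) * (lam * s + -(lam * t₁)) + d₁))))
        - (∫ θ in Set.Iic A, g θ) / lam|
      ≤ |∫ s in a..t, (f (Real.exp (lam * z s)) - f (Real.exp ((ξ + 1) * (lam * s + -(lam * t₁)) + d₁)))|
        + |(∫ θ in Set.Iic A, g θ) / lam| := abs_sub _ _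
    _ ≤ C₀ * C₁ * σ / (ν - ν') * Real.exp (-ν' * lam) + C₀ * Real.exp d₁ * Real.exp (-ν' * lam) := by
        have h2 : |(∫ θ in Set.Iic A, g θ) / lam| = |∫ θ in Set.Iic A, g θ| / lam := by
          rw [abs_div, abs_of_pos hlam0]
        rw [h2]
        exact add_le_add (hterm1.trans hmain) htail
    _ = (C₀ * C₁ * σ / (ν - ν') + C₀ * Real.exp d₁) * Real.exp (-ν' * lam) := by ring
end

section
/- Let β > 0, η > 1, d₊ ∈ ℝ, and let f : [0,∞) → ℝ be continuous, differentiable on (0,∞), with C₀ > 0 satisfying |f(u) − 1| ≤ C₀·u for u ∈ (0,1], |f(u) + β| ≤ C₀/u for u ≥ 1, and |f'(u)| ≤ C₀/(1+u²) for u > 0. Define w₂(τ) = −(β+1)·τ + ∫_{−∞}^{τ} (f(e^{(1−η)·θ + d₊}) + β) dθ. Let t₁ ∈ ℝ, q₀ ∈ ℝ, σ > 0, 0 < ν < (η−1)·σ, C₁ > 0, and let 0 < ν' < ν. Then there exist constants C₂ > 0 and λ₀ > 0 such that for every λ ≥ λ₀ and every measurable z : [t₁−σ, t₁+σ] → ℝ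 with |z(s) − ((1−η)·(s − t₁) + d₊/λ)| ≤ C₁·e^{−νλ} for all s, the function q(t) = q₀ + ∫_{t₁−σ}^{t} (f(e^{λ·z(s)}) − 1) ds satisfies |q(t) − (q₀ − (β+1)·σ + w₂(λ(t − t₁))/λ)| ≤ C₂·e^{−ν'λ} for all t ∈ [t₁−σ, t₁+σ]. -/
open Real MeasureTheory intervalIntegral

lemma expMul_intervalIntegral {c : ℝ} (hc : c ≠ 0) (y τ : ℝ) :
    ∫ x in y..τ, Real.exp (c * x) = (Real.exp (c * τ) - Real.exp (c * y)) / c := by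
  rw [intervalIntegral.integral_comp_mul_left (fun x => Real.exp x) hc, integral_exp]
  rw [smul_eq_mul]
  ring

lemma expMul_integrableOn_Iic {c : ℝ} (hc : 0 < c) (τ : ℝ) :
    IntegrableOn (fun θ => Real.exp (c * θ)) (Set.Iic τ) := by
  refine integrableOn_Iic_of_intervalIntegral_norm_bounded (Real.exp (c * τ) / c) τ
    (fun y => ((Real.continuous_exp.comp (continuous_const.mul continuous_id)).intervalIntegrable
      y τ).1) Filter.tendsto_id ?_
  filter_upwards with y
  have hnorm : Set.EqOn (fun x => ‖Real.exp (c * x)‖) (fun x => Real.exp (c * x))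
      (Set.uIcc y τ) := fun x _ => Real.norm_of_nonneg (Real.exp_pos _).le
  rw [intervalIntegral.integral_congr hnorm]
  rw [expMul_intervalIntegral hc.ne' y τ]
  have := (Real.exp_pos (c * y)).le
  have hcτ := (Real.exp_pos (c * τ)).le
  apply div_le_div_of_nonneg_right ?_ hc.le |>.trans_eq rfl
  linarith

lemma expMul_integral_Iic {c : ℝ} (hc : 0 < c) (τ : ℝ) :
    ∫ θ in Set.Iic τ, Real.exp (c * θ) = Real.exp (c * τ) / c := by
  refine tendsto_nhds_unique
    (intervalIntegral_tendsto_integral_Iic τ (expMul_integrableOn_Iic hc τ) Filter.tendsto_id) ?_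
  have h1 : Filter.Tendsto (fun y : ℝ => Real.exp (c * y)) Filter.atBot (nhds 0) :=
    Real.tendsto_exp_atBot.comp (Filter.Tendsto.const_mul_atBot hc Filter.tendsto_id)
  have h2 : Filter.Tendsto (fun y : ℝ => (Real.exp (c * τ) - Real.exp (c * y)) / c)
      Filter.atBot (nhds ((Real.exp (c * τ) - 0) / c)) :=
    (tendsto_const_nhds.sub h1).div_const c
  rw [sub_zero] at h2
  exact h2.congr fun y => (expMul_intervalIntegral hc.ne' y τ).symm

set_option maxHeartbeats 1000000 in
/-- boundary-layer step for the correction `q*_λ` near a decreasing zero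
crossing `t₁` of the delayed argument: if `z(s) = (1-η)(s-t₁) + d₊/λ + O(e^{-νλ})` on
`[t₁-σ, t₁+σ]`, then `q(t) = q₀ + ∫_{t₁-σ}^t (f(e^{λz(s)}) - 1) ds` satisfies
`q(t) = q₀ - (β+1)σ + w₂(λ(t-t₁))/λ + O(e^{-ν'λ})` uniformly, where
`w₂(τ) = -(β+1)τ + ∫_{-∞}^τ (f(e^{(1-η)θ+d₊}) + β) dθ`. -/
theorem stmt_16 (β η dstar C₀ : ℝ) (hβ : 0 < β) (hη : 1 < η) (hC₀ : 0 < C₀)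
    (f : ℝ → ℝ) (hfc : ContinuousOn f (Set.Ici 0))
    (hfd : ∀ u : ℝ, 0 < u → DifferentiableAt ℝ f u)
    (hf0 : ∀ u ∈ Set.Ioc (0:ℝ) 1, |f u - 1| ≤ C₀ * u)
    (hfinf : ∀ u : ℝ, 1 ≤ u → |f u + β| ≤ C₀ / u)
    (hf' : ∀ u : ℝ, 0 < u → |deriv f u| ≤ C₀ / (1 + u ^ 2))
    (t₁ q₀ σ ν C₁ ν' : ℝ) (hσ : 0 < σ) (hν : 0 < ν) (hνσ : ν < (η - 1) * σ)
    (hC₁ : 0 < C₁) (hν'0 : 0 < ν') (hν' : ν' < ν) :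
    ∃ C₂ > (0:ℝ), ∃ lam₀ > (0:ℝ), ∀ lam : ℝ, lam₀ ≤ lam →
      ∀ z : ℝ → ℝ, Measurable z →
        (∀ s ∈ Set.Icc (t₁ - σ) (t₁ + σ),
          |z s - ((1 - η) * (s - t₁) + dstar / lam)| ≤ C₁ * Real.exp (-ν * lam)) →
        ∀ t ∈ Set.Icc (t₁ - σ) (t₁ + σ),
          |(q₀ + ∫ s in (t₁ - σ)..t, (f (Real.exp (lam * z s)) - 1))
              - (q₀ - (β + 1) * σ + (-(β + 1) * (lam * (t - t₁))
                  + ∫ θ in Set.Iic (lam * (t - t₁)),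
                      (f (Real.exp ((1 - η) * θ + dstar)) + β)) / lam)|
            ≤ C₂ * Real.exp (-ν' * lam) := by
  have hc0 : (0:ℝ) < η - 1 := by linarith
  set c : ℝ := η - 1 with hcdef
  set A : ℝ := (C₀ + β + 1) * Real.exp (-dstar) with hAdef
  have hA0 : 0 < A := by positivity
  set g : ℝ → ℝ := fun θ => f (Real.exp ((1 - η) * θ + dstar)) + β with hgdef
  have hfe : Continuous fun a : ℝ => f (Real.exp a) :=
    hfc.comp_continuous Real.continuous_exp fun a => (Real.exp_pos a).le
  have hgc : Continuous g := by
    have hi : Continuous fun θ : ℝ => (1 - η) * θ + dstar :=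
      (continuous_const.mul continuous_id).add continuous_const
    exact (hfe.comp hi).add continuous_const
  -- pointwise exponential bound on g
  have hgb : ∀ θ : ℝ, |g θ| ≤ A * Real.exp (c * θ) := by
    intro θ
    have hkey : Real.exp (-((1 - η) * θ + dstar)) = Real.exp (c * θ) * Real.exp (-dstar) := by
      rw [← Real.exp_add]; congr 1; rw [hcdef]; ring
    have hea := Real.exp_pos ((1 - η) * θ + dstar)
    by_cases h1 : 1 ≤ Real.exp ((1 - η) * θ + dstar)
    · have h2 := hfinf _ h1
      have h3 : C₀ / Real.exp ((1 - η) * θ + dstar)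
          = C₀ * (Real.exp (c * θ) * Real.exp (-dstar)) := by
        rw [div_eq_mul_inv, ← Real.exp_neg, hkey]
      rw [h3] at h2
      have : g θ = f (Real.exp ((1 - η) * θ + dstar)) + β := rfl
      rw [this]
      have h4 : 0 < Real.exp (c * θ) * Real.exp (-dstar) := by positivity
      calc |f (Real.exp ((1 - η) * θ + dstar)) + β|
          ≤ C₀ * (Real.exp (c * θ) * Real.exp (-dstar)) := h2
        _ ≤ (C₀ + β + 1) * (Real.exp (c * θ) * Real.exp (-dstar)) := by nlinarith
        _ = A * Real.exp (c * θ) := by rw [hAdef]; ring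
    · push_neg at h1
      have hmem : Real.exp ((1 - η) * θ + dstar) ∈ Set.Ioc (0:ℝ) 1 := ⟨hea, h1.le⟩
      have h2 := hf0 _ hmem
      have h5 : |g θ| ≤ C₀ + β + 1 := by
        have habs := abs_sub_abs_le_abs_sub (f (Real.exp ((1 - η) * θ + dstar))) 1
        have : g θ = f (Real.exp ((1 - η) * θ + dstar)) + β := rfl
        rw [this]
        have h6 : |f (Real.exp ((1 - η) * θ + dstar)) - 1| ≤ C₀ := by
          calc |f (Real.exp ((1 - η) * θ + dstar)) - 1|
              ≤ C₀ * Real.exp ((1 - η) * θ + dstar) := h2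
            _ ≤ C₀ * 1 := by nlinarith
            _ = C₀ := mul_one _
        have := abs_add_le (f (Real.exp ((1 - η) * θ + dstar)) - 1) (1 + β)
        have heq : f (Real.exp ((1 - η) * θ + dstar)) + β
            = (f (Real.exp ((1 - η) * θ + dstar)) - 1) + (1 + β) := by ring
        rw [heq]
        have h7 : |(1:ℝ) + β| = 1 + β := abs_of_pos (by linarith)
        calc |(f (Real.exp ((1 - η) * θ + dstar)) - 1) + (1 + β)|
            ≤ |f (Real.exp ((1 - η) * θ + dstar)) - 1| + |(1:ℝ) + β| := abs_add_le _ _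
          _ ≤ C₀ + (1 + β) := by rw [h7]; linarith
          _ = C₀ + β + 1 := by ring
      -- in this case (1-η)θ + dstar ≤ 0, so exp (cθ) * exp (-dstar) ≥ 1
      have h8 : (1 - η) * θ + dstar ≤ 0 := (Real.exp_lt_one_iff.mp h1).le
      have h9 : (1:ℝ) ≤ Real.exp (c * θ) * Real.exp (-dstar) := by
        rw [← hkey]
        have : 0 ≤ -((1 - η) * θ + dstar) := by linarith
        exact Real.one_le_exp this
      calc |g θ| ≤ C₀ + β + 1 := h5
        _ = (C₀ + β + 1) * 1 := (mul_one _).symm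
        _ ≤ (C₀ + β + 1) * (Real.exp (c * θ) * Real.exp (-dstar)) := by nlinarith
        _ = A * Real.exp (c * θ) := by rw [hAdef]; ring
  -- integrability of g on each Iic
  have hgint : ∀ τ : ℝ, IntegrableOn g (Set.Iic τ) := by
    intro τ
    refine ((expMul_integrableOn_Iic hc0 τ).const_mul A).mono'
      (hgc.aestronglyMeasurable.restrict) ?_
    filter_upwards with θ
    simpa [Real.norm_eq_abs] using hgb θ
  -- bound on ∫_{Iic τ} g
  have hgIic : ∀ τ : ℝ, |∫ θ in Set.Iic τ, g θ| ≤ A * (Real.exp (c * τ) / c) := by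
    intro τ
    calc |∫ θ in Set.Iic τ, g θ| ≤ ∫ θ in Set.Iic τ, |g θ| := by
          simpa [Real.norm_eq_abs] using
            norm_integral_le_integral_norm (μ := volume.restrict (Set.Iic τ)) g
      _ ≤ ∫ θ in Set.Iic τ, A * Real.exp (c * θ) := by
          refine integral_mono (hgint τ).abs ((expMul_integrableOn_Iic hc0 τ).const_mul A) ?_
          intro θ; exact hgb θ
      _ = A * (Real.exp (c * τ) / c) := by
          rw [MeasureTheory.integral_const_mul, expMul_integral_Iic hc0 τ]
  -- boundedness of f ∘ exp
  have hBf : ∀ a : ℝ, |f (Real.exp a)| ≤ C₀ + β + 1 := by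
    intro a
    have hea := Real.exp_pos a
    by_cases h1 : 1 ≤ Real.exp a
    · have h2 := hfinf _ h1
      have h3 : C₀ / Real.exp a ≤ C₀ := by
        rw [div_le_iff₀ hea]; nlinarith
      have := abs_sub_abs_le_abs_sub (f (Real.exp a) + β) β
      have h4 : |f (Real.exp a)| ≤ |f (Real.exp a) + β| + |β| := by
        have := abs_add_le (f (Real.exp a) + β) (-β)
        simpa using this
      rw [abs_of_pos hβ] at h4
      linarith
    · push_neg at h1
      have h2 := hf0 _ ⟨hea, h1.le⟩
      have h4 : |f (Real.exp a)| ≤ |f (Real.exp a) - 1| + 1 := by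
        have := abs_add_le (f (Real.exp a) - 1) 1
        simpa using this
      have h5 : C₀ * Real.exp a ≤ C₀ := by nlinarith
      linarith
  -- Lipschitz property of a ↦ f (exp a)
  have hlip : ∀ x y : ℝ, |f (Real.exp x) - f (Real.exp y)| ≤ C₀ * |x - y| := by
    intro x y
    have hder : ∀ a : ℝ, HasDerivAt (fun b => f (Real.exp b))
        (deriv f (Real.exp a) * Real.exp a) a := fun a =>
      (hfd _ (Real.exp_pos a)).hasDerivAt.comp a (Real.hasDerivAt_exp a)
    have hbound : ∀ a : ℝ, ‖deriv f (Real.exp a) * Real.exp a‖ ≤ C₀ := by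
      intro a
      have h1 := hf' (Real.exp a) (Real.exp_pos a)
      have hea := Real.exp_pos a
      have h3 : (0:ℝ) < 1 + (Real.exp a) ^ 2 := by positivity
      rw [Real.norm_eq_abs, abs_mul, abs_of_pos hea]
      calc |deriv f (Real.exp a)| * Real.exp a
          ≤ C₀ / (1 + (Real.exp a) ^ 2) * Real.exp a :=
            mul_le_mul_of_nonneg_right h1 hea.le
        _ ≤ C₀ := by
            rw [div_mul_eq_mul_div, div_le_iff₀ h3]
            nlinarith [sq_nonneg (Real.exp a - 1)]
    have := Convex.norm_image_sub_le_of_norm_hasDerivWithin_le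
      (f' := fun a => deriv f (Real.exp a) * Real.exp a)
      (fun a _ => (hder a).hasDerivWithinAt) (fun a _ => hbound a) convex_univ
      (Set.mem_univ y) (Set.mem_univ x)
    simpa [Real.norm_eq_abs] using this
  -- choose constants
  refine ⟨2 * σ * C₀ * C₁ / (ν - ν') + A / c + 1, by
    have hd : (0:ℝ) < ν - ν' := by linarith
    have h1 : (0:ℝ) < 2 * σ * C₀ * C₁ / (ν - ν') := by positivity
    have h2 : (0:ℝ) < A / c := div_pos hA0 hc0
    linarith, 1, one_pos, ?_⟩
  intro lam hlam z hz hzb t ht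
  have hlam0 : (0:ℝ) < lam := lt_of_lt_of_le one_pos hlam
  obtain ⟨ht1, ht2⟩ := ht
  set a₀ : ℝ := t₁ - σ with ha₀
  set h₁ : ℝ → ℝ := fun s => f (Real.exp (lam * z s)) - 1 with hh₁def
  set h₂ : ℝ → ℝ := fun s => f (Real.exp (lam * ((1 - η) * (s - t₁) + dstar / lam))) - 1
    with hh₂def
  -- integrability of h₁ and h₂ on the interval
  have hmeas1 : Measurable h₁ :=
    (hfe.measurable.comp (hz.const_mul lam)).sub measurable_const
  have hii1 : IntervalIntegrable h₁ volume a₀ t := by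
    rw [intervalIntegrable_iff, Set.uIoc_of_le (show a₀ ≤ t by rw [ha₀]; linarith)]
    refine Measure.integrableOn_of_bounded (M := C₀ + β + 2) ?_
      hmeas1.aestronglyMeasurable ?_
    · exact (measure_Ioc_lt_top).ne
    · filter_upwards with s
      have hb1 := hBf (lam * z s)
      rw [Real.norm_eq_abs]
      have hb2 : |h₁ s| ≤ |f (Real.exp (lam * z s))| + |(1:ℝ)| := abs_sub _ _
      rw [abs_one] at hb2
      linarith
  have hcont2 : Continuous h₂ := by
    apply Continuous.sub _ continuous_const
    have hi : Continuous fun s : ℝ => lam * ((1 - η) * (s - t₁) + dstar / lam) :=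
      continuous_const.mul (((continuous_const.mul (continuous_id.sub
        continuous_const))).add continuous_const)
    exact hfe.comp hi
  have hii2 : IntervalIntegrable h₂ volume a₀ t := hcont2.intervalIntegrable _ _
  -- difference bound
  have hsub : ∫ s in a₀..t, (h₁ s - h₂ s) = (∫ s in a₀..t, h₁ s) - ∫ s in a₀..t, h₂ s :=
    intervalIntegral.integral_sub hii1 hii2
  set E : ℝ := ∫ s in a₀..t, (h₁ s - h₂ s) with hEdef
  have hE : |E| ≤ C₀ * (C₁ * (lam * Real.exp (-ν * lam))) * (2 * σ) := by
    have hbd : ∀ s ∈ Set.uIoc a₀ t, ‖h₁ s - h₂ s‖ ≤ C₀ * (C₁ * (lam * Real.exp (-ν * lam))) := by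
      intro s hs
      have hsub' : Set.uIoc a₀ t ⊆ Set.Icc (t₁ - σ) (t₁ + σ) := by
        rw [Set.uIoc_of_le (by linarith : a₀ ≤ t)]
        intro x hx
        exact ⟨by rw [ha₀] at hx; linarith [hx.1], le_trans hx.2 ht2⟩
      have hs' := hsub' hs
      have h1 := hzb s hs'
      have h2 := hlip (lam * z s) (lam * ((1 - η) * (s - t₁) + dstar / lam))
      rw [Real.norm_eq_abs]
      have h3 : |lam * z s - lam * ((1 - η) * (s - t₁) + dstar / lam)|
          = lam * |z s - ((1 - η) * (s - t₁) + dstar / lam)| := by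
        rw [← mul_sub, abs_mul, abs_of_pos hlam0]
      calc |h₁ s - h₂ s|
          = |f (Real.exp (lam * z s))
              - f (Real.exp (lam * ((1 - η) * (s - t₁) + dstar / lam)))| := by
            simp only [hh₁def, hh₂def]; ring_nf
        _ ≤ C₀ * |lam * z s - lam * ((1 - η) * (s - t₁) + dstar / lam)| := h2
        _ = C₀ * (lam * |z s - ((1 - η) * (s - t₁) + dstar / lam)|) := by rw [h3]
        _ ≤ C₀ * (lam * (C₁ * Real.exp (-ν * lam))) := by
            refine mul_le_mul_of_nonneg_left (mul_le_mul_of_nonneg_left h1 hlam0.le) hC₀.le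
        _ = C₀ * (C₁ * (lam * Real.exp (-ν * lam))) := by ring
    have := intervalIntegral.norm_integral_le_of_norm_le_const hbd
    rw [Real.norm_eq_abs] at this
    refine this.trans ?_
    have h4 : |t - a₀| ≤ 2 * σ := by
      rw [abs_le]; constructor <;> [rw [ha₀]; rw [ha₀]] <;> [linarith; linarith]
    have h5 : (0:ℝ) ≤ C₀ * (C₁ * (lam * Real.exp (-ν * lam))) := by positivity
    exact mul_le_mul_of_nonneg_left h4 h5
  -- compute ∫ h₂
  set I : ℝ := ∫ θ in Set.Iic (lam * (t - t₁)), g θ with hIdef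
  set J : ℝ := ∫ θ in Set.Iic (-(lam * σ)), g θ with hJdef
  have hval2 : ∫ s in a₀..t, h₂ s = lam⁻¹ * (I - J) - (β + 1) * (t - a₀) := by
    have heq : ∀ s : ℝ, h₂ s = g (lam * s + -(lam * t₁)) - (β + 1) := by
      intro s
      have harg : lam * ((1 - η) * (s - t₁) + dstar / lam)
          = (1 - η) * (lam * s + -(lam * t₁)) + dstar := by
        field_simp
        ring
      simp only [hh₂def, hgdef, harg]
      ring
    have hi : Continuous fun s : ℝ => lam * s + -(lam * t₁) :=
      (continuous_const.mul continuous_id).add continuous_const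
    have hci : IntervalIntegrable (fun s => g (lam * s + -(lam * t₁))) volume a₀ t :=
      (hgc.comp hi).intervalIntegrable _ _
    have hstep1 : ∫ s in a₀..t, h₂ s
        = (∫ s in a₀..t, g (lam * s + -(lam * t₁))) - (β + 1) * (t - a₀) := by
      rw [intervalIntegral.integral_congr
        (g := fun s => g (lam * s + -(lam * t₁)) - (β + 1)) (fun s _ => heq s)]
      rw [intervalIntegral.integral_sub hci (intervalIntegrable_const)]
      rw [intervalIntegral.integral_const, smul_eq_mul]
      ring
    have hstep2 : (∫ s in a₀..t, g (lam * s + -(lam * t₁)))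
        = lam⁻¹ * ∫ x in (-(lam * σ))..(lam * (t - t₁)), g x := by
      rw [intervalIntegral.integral_comp_mul_add g hlam0.ne' (-(lam * t₁))]
      rw [smul_eq_mul]
      congr 2
      · rw [ha₀]; ring
      · ring
    have hstep3 : (∫ x in (-(lam * σ))..(lam * (t - t₁)), g x) = I - J := by
      rw [hIdef, hJdef]
      exact (intervalIntegral.integral_Iic_sub_Iic (hgint _) (hgint _)).symm
    rw [hstep1, hstep2, hstep3]
  clear_value E I J
  -- algebraic identity
  have hkey : (q₀ + ∫ s in a₀..t, h₁ s)
      - (q₀ - (β + 1) * σ + (-(β + 1) * (lam * (t - t₁)) + I) / lam)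
      = E - J / lam := by
    have h6 : (∫ s in a₀..t, h₁ s) = E + ∫ s in a₀..t, h₂ s := by
      rw [hsub]; ring
    rw [h6, hval2]
    rw [ha₀]
    field_simp
    ring
  -- final estimate
  have hgoal : |E - J / lam| ≤ (2 * σ * C₀ * C₁ / (ν - ν') + A / c + 1) * Real.exp (-ν' * lam) := by
    have hexp1 : lam * Real.exp (-ν * lam) ≤ Real.exp (-ν' * lam) / (ν - ν') := by
      have hd : (0:ℝ) < ν - ν' := by linarith
      have h7 : (ν - ν') * lam ≤ Real.exp ((ν - ν') * lam) := by
        have := Real.add_one_le_exp ((ν - ν') * lam)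
        linarith
      have h8 : lam ≤ Real.exp ((ν - ν') * lam) / (ν - ν') := by
        rw [le_div_iff₀ hd]; linarith [h7]
      have h9 : lam * Real.exp (-ν * lam)
          ≤ (Real.exp ((ν - ν') * lam) / (ν - ν')) * Real.exp (-ν * lam) :=
        mul_le_mul_of_nonneg_right h8 (Real.exp_pos _).le
      refine h9.trans_eq ?_
      rw [div_mul_eq_mul_div, ← Real.exp_add]
      congr 2
      ring
    have hEbound : |E| ≤ (2 * σ * C₀ * C₁ / (ν - ν')) * Real.exp (-ν' * lam) := by
      refine hE.trans ?_
      have := mul_le_mul_of_nonneg_left hexp1 (by positivity : (0:ℝ) ≤ C₀ * C₁ * (2 * σ))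
      calc C₀ * (C₁ * (lam * Real.exp (-ν * lam))) * (2 * σ)
          = C₀ * C₁ * (2 * σ) * (lam * Real.exp (-ν * lam)) := by ring
        _ ≤ C₀ * C₁ * (2 * σ) * (Real.exp (-ν' * lam) / (ν - ν')) := this
        _ = (2 * σ * C₀ * C₁ / (ν - ν')) * Real.exp (-ν' * lam) := by ring
    have hJbound : |J| / lam ≤ (A / c) * Real.exp (-ν' * lam) := by
      have h10 := hgIic (-(lam * σ))
      rw [← hJdef] at h10
      have h11 : Real.exp (c * -(lam * σ)) ≤ Real.exp (-ν' * lam) := by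
        apply Real.exp_le_exp.mpr
        have hcσ : ν' ≤ c * σ := by linarith
        nlinarith [mul_le_mul_of_nonneg_right hcσ hlam0.le]
      have h12 : |J| / lam ≤ |J| := div_le_self (abs_nonneg J) hlam
      refine h12.trans (h10.trans ?_)
      calc A * (Real.exp (c * -(lam * σ)) / c)
          ≤ A * (Real.exp (-ν' * lam) / c) := by
            apply mul_le_mul_of_nonneg_left _ hA0.le
            exact div_le_div_of_nonneg_right h11 hc0.le
        _ = (A / c) * Real.exp (-ν' * lam) := by ring
    calc |E - J / lam| ≤ |E| + |J / lam| := abs_sub _ _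
      _ = |E| + |J| / lam := by rw [abs_div, abs_of_pos hlam0]
      _ ≤ (2 * σ * C₀ * C₁ / (ν - ν')) * Real.exp (-ν' * lam)
          + (A / c) * Real.exp (-ν' * lam) := add_le_add hEbound hJbound
      _ ≤ (2 * σ * C₀ * C₁ / (ν - ν') + A / c + 1) * Real.exp (-ν' * lam) := by
          nlinarith [Real.exp_pos (-ν' * lam)]
  calc |(q₀ + ∫ s in a₀..t, h₁ s)
      - (q₀ - (β + 1) * σ + (-(β + 1) * (lam * (t - t₁)) + I) / lam)|
      = |E - J / lam| := by rw [hkey]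
    _ ≤ (2 * σ * C₀ * C₁ / (ν - ν') + A / c + 1) * Real.exp (-ν' * lam) := hgoal
end

section
/- Let β > 0 and let f : [0,∞) → ℝ be continuous with |f(u) + β| ≤ C₀/u for all u ≥ 1, for some C₀ > 0. Let ν > 0, a < b, q₀ ∈ ℝ and λ ≥ 0. Then for every measurable function z : [a,b] → ℝ with z(s) ≥ ν for all s ∈ [a,b], the function q(t) = q₀ + ∫_{a}^{t} (f(e^{λ·z(s)}) − 1) ds satisfies |q(t) − (q₀ − (β+1)·(t − a))| ≤ C₀·(b − a)·e^{−νλ} for all t ∈ [a,b]. -/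
open Real MeasureTheory intervalIntegral

/-- the 'linear decrease' step: if the delayed argument `z` stays above
`ν > 0` on `[a,b]`, then `q(t) = q₀ + ∫_a^t (f(e^{λz(s)}) - 1) ds` stays within
`C₀(b-a)e^{-νλ}` of the affine function `q₀ - (β+1)(t-a)`. -/
theorem stmt_19 (β C₀ ν a b q₀ lam : ℝ) (hβ : 0 < β) (hC₀ : 0 < C₀) (hν : 0 < ν)
    (hab : a < b) (hlam : 0 ≤ lam)
    (f : ℝ → ℝ) (hfc : ContinuousOn f (Set.Ici 0))
    (hfinf : ∀ u : ℝ, 1 ≤ u → |f u + β| ≤ C₀ / u) :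
    ∀ z : ℝ → ℝ, Measurable z → (∀ s ∈ Set.Icc a b, ν ≤ z s) →
      ∀ t ∈ Set.Icc a b,
        |(q₀ + ∫ s in a..t, (f (Real.exp (lam * z s)) - 1))
            - (q₀ - (β + 1) * (t - a))|
          ≤ C₀ * (b - a) * Real.exp (-ν * lam) := by
  intro z hz hzν t ht
  obtain ⟨hta, htb⟩ := ht
  set c : ℝ := C₀ * Real.exp (-ν * lam) with hc
  have hcpos : 0 < c := by positivity
  -- key pointwise bound
  have key : ∀ s ∈ Set.Icc a b, |f (Real.exp (lam * z s)) + β| ≤ c := by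
    intro s hs
    have hzs : ν ≤ z s := hzν s hs
    have hz0 : 0 ≤ z s := le_trans hν.le hzs
    have h1 : (1 : ℝ) ≤ Real.exp (lam * z s) :=
      Real.one_le_exp (mul_nonneg hlam hz0)
    have h2 : Real.exp (ν * lam) ≤ Real.exp (lam * z s) := by
      apply Real.exp_le_exp.2
      calc ν * lam = lam * ν := by ring
        _ ≤ lam * z s := mul_le_mul_of_nonneg_left hzs hlam
    calc |f (Real.exp (lam * z s)) + β| ≤ C₀ / Real.exp (lam * z s) :=
          hfinf _ h1
      _ ≤ C₀ / Real.exp (ν * lam) := by gcongr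
      _ = c := by
          rw [hc, neg_mul, Real.exp_neg, div_eq_mul_inv]
  -- measurability of the integrand
  have hF : Continuous (fun u : ℝ => f (max u 0)) :=
    hfc.comp_continuous (continuous_id.max continuous_const)
      (fun u => le_max_right u 0)
  have hg : Measurable (fun s => f (Real.exp (lam * z s))) := by
    have heq : (fun s => f (Real.exp (lam * z s)))
        = fun s => (fun u : ℝ => f (max u 0)) (Real.exp (lam * z s)) := by
      funext s
      simp [max_eq_left (Real.exp_nonneg _)]
    rw [heq]
    exact hF.measurable.comp (Real.measurable_exp.comp (hz.const_mul lam))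
  -- integrability
  have hsub : Set.Ioc a t ⊆ Set.Icc a b := fun s hs =>
    ⟨hs.1.le, le_trans hs.2 htb⟩
  have hint : IntervalIntegrable (fun s => f (Real.exp (lam * z s)) - 1) volume a t := by
    rw [intervalIntegrable_iff, Set.uIoc_of_le hta]
    apply MeasureTheory.Integrable.mono' (g := fun _ => c + β + 1)
    · exact integrableOn_const measure_Ioc_lt_top.ne
    · exact ((hg.sub measurable_const).aestronglyMeasurable).restrict
    · filter_upwards [ae_restrict_mem measurableSet_Ioc] with s hs
      have h3 : f (Real.exp (lam * z s)) - 1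
          = (f (Real.exp (lam * z s)) + β) + (-(β + 1)) := by ring
      calc ‖f (Real.exp (lam * z s)) - 1‖
          = |(f (Real.exp (lam * z s)) + β) + (-(β + 1))| := by rw [← h3]; rfl
        _ ≤ |f (Real.exp (lam * z s)) + β| + |(-(β + 1))| := abs_add_le _ _
        _ = |f (Real.exp (lam * z s)) + β| + (β + 1) := by
            rw [abs_neg, abs_of_pos (by linarith : (0:ℝ) < β + 1)]
        _ ≤ c + β + 1 := by linarith [key s (hsub hs)]
  have hint2 : IntervalIntegrable (fun s => f (Real.exp (lam * z s)) + β) volume a t := by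
    have h := hint.add (_root_.intervalIntegrable_const (c := β + 1))
    convert h using 1
    funext s; ring
  -- rewrite integral
  have hsplit : (∫ s in a..t, (f (Real.exp (lam * z s)) - 1))
      = (∫ s in a..t, (f (Real.exp (lam * z s)) + β)) - (β + 1) * (t - a) := by
    have h1 : (fun s => f (Real.exp (lam * z s)) - 1)
        = fun s => (f (Real.exp (lam * z s)) + β) - (β + 1) := by
      funext s; ring
    rw [h1, intervalIntegral.integral_sub hint2 _root_.intervalIntegrable_const,
      intervalIntegral.integral_const]
    ring_nf
    ring
  have hbound : |∫ s in a..t, (f (Real.exp (lam * z s)) + β)| ≤ c * (t - a) := by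
    have := intervalIntegral.norm_integral_le_of_norm_le_const
      (C := c) (f := fun s => f (Real.exp (lam * z s)) + β) (a := a) (b := t)
      (fun s hs => by
        rw [Set.uIoc_of_le hta] at hs
        exact key s (hsub hs))
    rw [abs_of_nonneg (by linarith : (0:ℝ) ≤ t - a)] at this
    exact this
  have heq2 : (q₀ + ∫ s in a..t, (f (Real.exp (lam * z s)) - 1))
      - (q₀ - (β + 1) * (t - a))
      = ∫ s in a..t, (f (Real.exp (lam * z s)) + β) := by
    rw [hsplit]; ring
  rw [heq2]
  calc |∫ s in a..t, (f (Real.exp (lam * z s)) + β)| ≤ c * (t - a) := hbound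
    _ ≤ c * (b - a) := by
        apply mul_le_mul_of_nonneg_left _ hcpos.le
        linarith
    _ = C₀ * (b - a) * Real.exp (-ν * lam) := by rw [hc]; ring
end
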